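/- For a square-summable sequence φ: ℤ² → ℂ, ‖φ‖_{ℓ∞(ℤ²)} ≤ (4/√2)^{1/4} · ‖∇_D φ‖_{ℓ²(ℤ²)}^{1/4} · ‖φ‖_{ℓ²(ℤ²)}^{3/4}, the case d = 2, p = 1 of the discrete Agmon–Kolmogorov inequality. -/

import Mathlib

noncomputable section

/-- Partial difference in the first coordinate on ℤ². -/
def D1 (φ : ℤ × ℤ → ℂ) : ℤ × ℤ → ℂ := fun p => φ (p.1 + 1, p.2) - φ p

/-- Partial difference in the second coordinate on ℤ². -/
def D2 (φ : ℤ × ℤ → ℂ) : ℤ × ℤ → ℂ := fun p => φ (p.1, p.2 + 1) - φ p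

/-- The ℓ²(ℤ²) norm. -/
def l2 (φ : ℤ × ℤ → ℂ) : ℝ := Real.sqrt (∑' p : ℤ × ℤ, ‖φ p‖ ^ 2)

/-!
In one dimension, `‖ψ m‖²` is bounded by the total variation `∑ |‖ψ (k+1)‖² - ‖ψ k‖²|`, because
`‖ψ k‖² → 0`; factoring the difference of squares and applying Cauchy–Schwarz against `ψ(· + 1)`
and `ψ` gives `‖ψ m‖² ≤ 2 ‖Dψ‖ ‖ψ‖`. Applied along the row and the column through a point `p`,
this yields `|φ p|⁴ ≤ 4 ‖D₁φ‖ ‖D₂φ‖ ‖φ‖² ≤ 2 ‖∇φ‖² ‖φ‖²`, and one factor `‖∇φ‖` is traded for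
`2√2 ‖φ‖` using `‖Dᵢφ‖ ≤ 2 ‖φ‖`.
-/

open Filter Topology Function

theorem le_tsum_abs_sub_of_tendsto_atTop {g : ℤ → ℝ} (hg : Tendsto g atTop (𝓝 0))
    (hd : Summable fun k => |g (k + 1) - g k|) (m : ℤ) : g m ≤ ∑' k, |g (k + 1) - g k| := by
  have hinj : Injective fun j : ℕ => m + (j : ℤ) := fun _ _ h => by simpa using h
  have hpartial (N : ℕ) : g m - g (m + N) ≤ ∑' k, |g (k + 1) - g k| :=
    calc g m - g (m + N) = ∑ j ∈ Finset.range N, (g (m + j) - g (m + j + 1)) := by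
          simpa [add_assoc] using (Finset.sum_range_sub' (fun j : ℕ => g (m + j)) N).symm
      _ ≤ ∑ j ∈ Finset.range N, |g (m + j + 1) - g (m + j)| :=
          Finset.sum_le_sum fun _ _ => by rw [abs_sub_comm]; exact le_abs_self _
      _ ≤ ∑' j : ℕ, |g (m + j + 1) - g (m + j)| :=
          (hd.comp_injective hinj).sum_le_tsum _ fun _ _ => abs_nonneg _
      _ ≤ ∑' k, |g (k + 1) - g k| := tsum_comp_le_tsum_of_inj hd (fun _ => abs_nonneg _) hinj
  have hlim : Tendsto (fun N : ℕ => g m - g (m + N)) atTop (𝓝 (g m - 0)) :=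
    (hg.comp (tendsto_atTop_add_const_left _ m tendsto_natCast_atTop_atTop)).const_sub _
  simpa using le_of_tendsto' hlim hpartial

section SquareSummable

variable {ι E : Type*} [SeminormedAddCommGroup E]

theorem summable_and_tsum_mul_le_sqrt_mul_sqrt {f g : ι → ℝ} (hf : ∀ i, 0 ≤ f i)
    (hg : ∀ i, 0 ≤ g i) (hf₂ : Summable fun i => f i ^ 2) (hg₂ : Summable fun i => g i ^ 2) :
    (Summable fun i => f i * g i) ∧
      ∑' i, f i * g i ≤ √(∑' i, f i ^ 2) * √(∑' i, g i ^ 2) := by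
  simp only [← Real.rpow_two, Real.sqrt_eq_rpow] at hf₂ hg₂ ⊢
  exact Real.summable_and_inner_le_Lp_mul_Lq_tsum_of_nonneg .two_two hf hg hf₂ hg₂

theorem norm_sub_sq_le (x y : E) : ‖x - y‖ ^ 2 ≤ 2 * ‖x‖ ^ 2 + 2 * ‖y‖ ^ 2 := by
  nlinarith [norm_sub_le x y, norm_nonneg (x - y), sq_nonneg (‖x‖ - ‖y‖)]

theorem abs_sq_norm_sub_sq_norm_le (x y : E) : |‖x‖ ^ 2 - ‖y‖ ^ 2| ≤ ‖x - y‖ * (‖x‖ + ‖y‖) := by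
  rw [sq_sub_sq, abs_mul, abs_of_nonneg (by positivity), mul_comm]
  exact mul_le_mul_of_nonneg_right (abs_norm_sub_norm_le x y) (by positivity)

theorem Summable.norm_sub_sq {f g : ι → E} (hf : Summable fun i => ‖f i‖ ^ 2)
    (hg : Summable fun i => ‖g i‖ ^ 2) : Summable fun i => ‖f i - g i‖ ^ 2 :=
  .of_nonneg_of_le (fun _ => sq_nonneg _) (fun _ => norm_sub_sq_le _ _)
    ((hf.mul_left 2).add (hg.mul_left 2))

theorem tsum_norm_sub_sq_le {f g : ι → E} (hf : Summable fun i => ‖f i‖ ^ 2)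
    (hg : Summable fun i => ‖g i‖ ^ 2) :
    ∑' i, ‖f i - g i‖ ^ 2 ≤ 2 * ∑' i, ‖f i‖ ^ 2 + 2 * ∑' i, ‖g i‖ ^ 2 := by
  rw [← tsum_mul_left, ← tsum_mul_left, ← (hf.mul_left 2).tsum_add (hg.mul_left 2)]
  exact (hf.norm_sub_sq hg).tsum_le_tsum (fun _ => norm_sub_sq_le _ _)
    ((hf.mul_left 2).add (hg.mul_left 2))

theorem sq_norm_le_two_mul_sqrt_tsum_sub_mul_sqrt_tsum {ψ : ℤ → E}
    (hψ : Summable fun k => ‖ψ k‖ ^ 2) (m : ℤ) :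
    ‖ψ m‖ ^ 2 ≤ 2 * √(∑' k, ‖ψ (k + 1) - ψ k‖ ^ 2) * √(∑' k, ‖ψ k‖ ^ 2) := by
  set A := √(∑' k, ‖ψ (k + 1) - ψ k‖ ^ 2)
  set S := √(∑' k, ‖ψ k‖ ^ 2)
  have hshift : Summable fun k => ‖ψ (k + 1)‖ ^ 2 :=
    (Equiv.addRight (1 : ℤ)).summable_iff (f := fun k => ‖ψ k‖ ^ 2) |>.mpr hψ
  have hshift_tsum : ∑' k, ‖ψ (k + 1)‖ ^ 2 = ∑' k, ‖ψ k‖ ^ 2 :=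
    (Equiv.addRight (1 : ℤ)).tsum_eq fun k => ‖ψ k‖ ^ 2
  have hD : Summable fun k => ‖ψ (k + 1) - ψ k‖ ^ 2 := hshift.norm_sub_sq hψ
  obtain ⟨hs₁, hcs₁⟩ := summable_and_tsum_mul_le_sqrt_mul_sqrt
    (fun k => norm_nonneg (ψ (k + 1) - ψ k)) (fun k => norm_nonneg (ψ (k + 1))) hD hshift
  obtain ⟨hs₀, hcs₀⟩ := summable_and_tsum_mul_le_sqrt_mul_sqrt
    (fun k => norm_nonneg (ψ (k + 1) - ψ k)) (fun k => norm_nonneg (ψ k)) hD hψ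
  rw [hshift_tsum] at hcs₁
  have hdiff (k : ℤ) : |‖ψ (k + 1)‖ ^ 2 - ‖ψ k‖ ^ 2| ≤
      ‖ψ (k + 1) - ψ k‖ * ‖ψ (k + 1)‖ + ‖ψ (k + 1) - ψ k‖ * ‖ψ k‖ :=
    (abs_sq_norm_sub_sq_norm_le _ _).trans_eq (mul_add _ _ _)
  have hdecay : Tendsto (fun k => ‖ψ k‖ ^ 2) atTop (𝓝 0) :=
    hψ.tendsto_cofinite_zero.mono_left (Int.cofinite_eq ▸ le_sup_right)
  have hvar : Summable fun k => |‖ψ (k + 1)‖ ^ 2 - ‖ψ k‖ ^ 2| :=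
    .of_nonneg_of_le (fun _ => abs_nonneg _) hdiff (hs₁.add hs₀)
  calc ‖ψ m‖ ^ 2 ≤ ∑' k, |‖ψ (k + 1)‖ ^ 2 - ‖ψ k‖ ^ 2| :=
        le_tsum_abs_sub_of_tendsto_atTop hdecay hvar m
    _ ≤ ∑' k, (‖ψ (k + 1) - ψ k‖ * ‖ψ (k + 1)‖ + ‖ψ (k + 1) - ψ k‖ * ‖ψ k‖) :=
        hvar.tsum_le_tsum hdiff (hs₁.add hs₀)
    _ = ∑' k, ‖ψ (k + 1) - ψ k‖ * ‖ψ (k + 1)‖ + ∑' k, ‖ψ (k + 1) - ψ k‖ * ‖ψ k‖ :=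
        hs₁.tsum_add hs₀
    _ ≤ A * S + A * S := add_le_add hcs₁ hcs₀
    _ = 2 * A * S := by ring

end SquareSummable

theorem l2_nonneg (φ : ℤ × ℤ → ℂ) : 0 ≤ l2 φ := Real.sqrt_nonneg _

theorem l2_sq (φ : ℤ × ℤ → ℂ) : l2 φ ^ 2 = ∑' p, ‖φ p‖ ^ 2 :=
  Real.sq_sqrt (tsum_nonneg fun _ => sq_nonneg _)

theorem l2_comp_swap (φ : ℤ × ℤ → ℂ) : l2 (φ ∘ Prod.swap) = l2 φ :=
  congrArg Real.sqrt ((Equiv.prodComm ℤ ℤ).tsum_eq fun p => ‖φ p‖ ^ 2)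

theorem D2_eq_D1_comp_swap (φ : ℤ × ℤ → ℂ) : D2 φ = D1 (φ ∘ Prod.swap) ∘ Prod.swap := rfl

theorem l2_D2_eq_l2_D1_comp_swap (φ : ℤ × ℤ → ℂ) : l2 (D2 φ) = l2 (D1 (φ ∘ Prod.swap)) := by
  rw [D2_eq_D1_comp_swap, l2_comp_swap]

section Plane

variable {φ : ℤ × ℤ → ℂ}

theorem summable_sq_norm_comp_swap (h : Summable fun p => ‖φ p‖ ^ 2) :
    Summable fun p => ‖(φ ∘ Prod.swap) p‖ ^ 2 :=
  (Equiv.prodComm ℤ ℤ).summable_iff.mpr h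

theorem summable_sq_norm_shift_fst (h : Summable fun p => ‖φ p‖ ^ 2) :
    Summable fun p : ℤ × ℤ => ‖φ (p.1 + 1, p.2)‖ ^ 2 :=
  ((Equiv.addRight 1).prodCongr (Equiv.refl ℤ)).summable_iff.mpr h

theorem tsum_sq_norm_shift_fst (φ : ℤ × ℤ → ℂ) :
    ∑' p : ℤ × ℤ, ‖φ (p.1 + 1, p.2)‖ ^ 2 = ∑' p, ‖φ p‖ ^ 2 :=
  ((Equiv.addRight 1).prodCongr (Equiv.refl ℤ)).tsum_eq fun p => ‖φ p‖ ^ 2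

theorem summable_sq_norm_D1 (h : Summable fun p => ‖φ p‖ ^ 2) :
    Summable fun p => ‖D1 φ p‖ ^ 2 :=
  (summable_sq_norm_shift_fst h).norm_sub_sq h

theorem l2_D1_sq_le (h : Summable fun p => ‖φ p‖ ^ 2) : l2 (D1 φ) ^ 2 ≤ 4 * l2 φ ^ 2 := by
  have hbound : ∑' p, ‖D1 φ p‖ ^ 2 ≤
      2 * ∑' p : ℤ × ℤ, ‖φ (p.1 + 1, p.2)‖ ^ 2 + 2 * ∑' p, ‖φ p‖ ^ 2 :=
    tsum_norm_sub_sq_le (summable_sq_norm_shift_fst h) h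
  rw [tsum_sq_norm_shift_fst] at hbound
  rw [l2_sq, l2_sq]
  linarith

theorem l2_D2_sq_le (h : Summable fun p => ‖φ p‖ ^ 2) : l2 (D2 φ) ^ 2 ≤ 4 * l2 φ ^ 2 := by
  simpa only [l2_D2_eq_l2_D1_comp_swap, l2_comp_swap] using
    l2_D1_sq_le (summable_sq_norm_comp_swap h)

theorem sq_norm_le_two_mul_l2_D1_mul_l2 (h : Summable fun p => ‖φ p‖ ^ 2) (p : ℤ × ℤ) :
    ‖φ p‖ ^ 2 ≤ 2 * l2 (D1 φ) * l2 φ := by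
  have hrow : Injective fun k : ℤ => (k, p.2) := fun _ _ hk => (Prod.mk.inj hk).1
  refine (sq_norm_le_two_mul_sqrt_tsum_sub_mul_sqrt_tsum (h.comp_injective hrow) p.1).trans ?_
  unfold l2
  gcongr
  · exact tsum_comp_le_tsum_of_inj (summable_sq_norm_D1 h) (fun _ => sq_nonneg _) hrow
  · exact tsum_comp_le_tsum_of_inj h (fun _ => sq_nonneg _) hrow

theorem sq_norm_le_two_mul_l2_D2_mul_l2 (h : Summable fun p => ‖φ p‖ ^ 2) (p : ℤ × ℤ) :
    ‖φ p‖ ^ 2 ≤ 2 * l2 (D2 φ) * l2 φ := by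
  simpa only [l2_D2_eq_l2_D1_comp_swap, l2_comp_swap, comp_apply, Prod.swap_swap] using
    sq_norm_le_two_mul_l2_D1_mul_l2 (summable_sq_norm_comp_swap h) p.swap

end Plane

theorem mul_le_sqrt_two_mul_sqrt_sq_add_sq_mul {a b S : ℝ} (haS : a ^ 2 ≤ 4 * S ^ 2)
    (hbS : b ^ 2 ≤ 4 * S ^ 2) (hS : 0 ≤ S) :
    a * b ≤ √2 * √(a ^ 2 + b ^ 2) * S := by
  set G := √(a ^ 2 + b ^ 2)
  have hG : G ≤ 2 * √2 * S := Real.sqrt_le_iff.mpr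
    ⟨by positivity, by nlinarith [Real.sq_sqrt (zero_le_two : (0 : ℝ) ≤ 2)]⟩
  have hGG : G * G = a ^ 2 + b ^ 2 := Real.mul_self_sqrt (by positivity)
  nlinarith [sq_nonneg (a - b), mul_le_mul_of_nonneg_left hG (Real.sqrt_nonneg (a ^ 2 + b ^ 2))]

theorem le_rpow_mul_rpow_mul_rpow_of_pow_four_le {x c G S : ℝ} (hc : 0 ≤ c) (hG : 0 ≤ G)
    (hS : 0 ≤ S) (h : x ^ 4 ≤ c * G * S ^ 3) :
    x ≤ c ^ (1 / 4 : ℝ) * G ^ (1 / 4 : ℝ) * S ^ (3 / 4 : ℝ) := by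
  have hpow (y r : ℝ) (hy : 0 ≤ y) : (y ^ r) ^ 4 = y ^ (r * 4) := by
    rw [← Real.rpow_natCast, ← Real.rpow_mul hy, Nat.cast_ofNat]
  refine le_of_pow_le_pow_left₀ four_ne_zero (by positivity) ?_
  rw [mul_pow, mul_pow, hpow c _ hc, hpow G _ hG, hpow S _ hS]
  norm_num
  exact h

/-- Agmon–Kolmogorov inequality on ℤ², case d = 2, p = 1. -/
theorem agmon_kolmogorov_2d_p1 (φ : ℤ × ℤ → ℂ) (h : Summable fun p : ℤ × ℤ => ‖φ p‖ ^ 2) :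
    (⨆ p : ℤ × ℤ, ‖φ p‖) ≤
      (8 / Real.sqrt 2) ^ ((1 : ℝ) / 4) *
        Real.sqrt (l2 (D1 φ) ^ 2 + l2 (D2 φ) ^ 2) ^ ((1 : ℝ) / 4) *
          l2 φ ^ ((3 : ℝ) / 4) := by
  have hl2 := l2_nonneg φ
  have hconst : 8 / √2 = 4 * √2 := by
    rw [show (8 : ℝ) = 4 * 2 by norm_num, mul_div_assoc, Real.div_sqrt]
  refine ciSup_le fun p => le_rpow_mul_rpow_mul_rpow_of_pow_four_le (by positivity)
    (Real.sqrt_nonneg _) hl2 ?_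
  calc ‖φ p‖ ^ 4 = ‖φ p‖ ^ 2 * ‖φ p‖ ^ 2 := by ring
    _ ≤ (2 * l2 (D1 φ) * l2 φ) * (2 * l2 (D2 φ) * l2 φ) :=
        mul_le_mul (sq_norm_le_two_mul_l2_D1_mul_l2 h p) (sq_norm_le_two_mul_l2_D2_mul_l2 h p)
          (sq_nonneg _) (mul_nonneg (mul_nonneg zero_le_two (l2_nonneg _)) hl2)
    _ = 4 * (l2 (D1 φ) * l2 (D2 φ)) * l2 φ ^ 2 := by ring
    _ ≤ 4 * (√2 * √(l2 (D1 φ) ^ 2 + l2 (D2 φ) ^ 2) * l2 φ) * l2 φ ^ 2 := by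
        refine mul_le_mul_of_nonneg_right (mul_le_mul_of_nonneg_left ?_ zero_le_four) (sq_nonneg _)
        exact mul_le_sqrt_two_mul_sqrt_sq_add_sq_mul (l2_D1_sq_le h) (l2_D2_sq_le h) hl2
    _ = 8 / √2 * √(l2 (D1 φ) ^ 2 + l2 (D2 φ) ^ 2) * l2 φ ^ 3 := by rw [hconst]; ring
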